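/- arXiv:2509.08680 — 3 statements merged into one kernel-verified Lean document; each statement's English description precedes it below -/
import Mathlib

section
/- Let M be an r-uniform hypergraph that is a disjoint union of Sidorenko r-graphs S₁,…,S_ℓ, and let M' be a disjoint union of some subcollection of {S₁,…,S_ℓ}. Then for every n-vertex r-graph H with hom(M − V(M'), H) > 0, one has hom(M,H) / hom(M − V(M'), H) ≥ t_{K_r^{(r)}}(H)^{d_M(V(M'))} · n^{v(M')}. -/
open Finset

/-- An `r`-uniform hypergraph on vertex type `V`: a set of edges, each an `r`-element
subset of `V`. -/
structure HGraph (r : ℕ) (V : Type) where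
  edges : Finset (Finset V)
  uniform : ∀ e ∈ edges, e.card = r

variable {r : ℕ} {α β γ : Type}

/-- The set of homomorphisms from `F` to `H`: maps sending every edge of `F` to an edge of `H`. -/
def homFinset [Fintype α] [DecidableEq α] [Fintype β] [DecidableEq β]
    (F : HGraph r α) (H : HGraph r β) : Finset (α → β) :=
  Finset.univ.filter fun φ => ∀ e ∈ F.edges, e.image φ ∈ H.edges

/-- The number of homomorphisms from `F` to `H`. -/
def homCount [Fintype α] [DecidableEq α] [Fintype β] [DecidableEq β]
    (F : HGraph r α) (H : HGraph r β) : ℕ :=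
  (homFinset F H).card

/-- The homomorphism density `t_F(H) = hom(F,H) / v(H)^{v(F)}`. -/
noncomputable def homDensity [Fintype α] [DecidableEq α] [Fintype β] [DecidableEq β]
    (F : HGraph r α) (H : HGraph r β) : ℝ :=
  (homCount F H : ℝ) / (Fintype.card β : ℝ) ^ (Fintype.card α)

/-- `K_r^{(r)}`: the `r`-graph consisting of a single edge on `r` vertices. -/
def KEdge (r : ℕ) : HGraph r (Fin r) :=
  ⟨{Finset.univ}, by intro e he; rw [Finset.mem_singleton] at he; subst he; simp⟩

/-- Edge density of an `r`-graph, `t_{K_r^{(r)}}(H)`. -/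
noncomputable def edgeDensity [Fintype β] [DecidableEq β] (H : HGraph r β) : ℝ :=
  homDensity (KEdge r) H

/-- An `r`-graph `F` is Sidorenko if `t_F(H) ≥ t_{K_r^{(r)}}(H)^{e(F)}` for all `r`-graphs `H`. -/
def IsSidorenko [Fintype α] [DecidableEq α] (F : HGraph r α) : Prop :=
  ∀ (β : Type) [Fintype β] [DecidableEq β] (H : HGraph r β),
    homDensity F H ≥ edgeDensity H ^ F.edges.card

/-- The Sidorenko exponent
`s(F) = sup {s ≥ 0 : ∃ r-graph H with t_F(H) = t_{K_r^{(r)}}(H)^s > 0}`. -/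
noncomputable def sidorenkoExp [Fintype α] [DecidableEq α] (F : HGraph r α) : ℝ :=
  sSup {s : ℝ | 0 ≤ s ∧ ∃ (n : ℕ) (H : HGraph r (Fin n)),
    homDensity F H = edgeDensity H ^ s ∧ 0 < edgeDensity H ^ s}

/-- `d_M(U)`: the number of edges of `M` containing at least one vertex of `U`. -/
def degNear [DecidableEq α] (M : HGraph r α) (U : Finset α) : ℕ :=
  (M.edges.filter fun e => ∃ v ∈ U, v ∈ e).card

/-- The set of vertices appearing in some edge of a given edge set. -/
def edgeSupport [DecidableEq α] (Es : Finset (Finset α)) : Finset α :=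
  Es.biUnion id
variable {ι : Type} [DecidableEq ι] {A : ι → Type} [∀ i, DecidableEq (A i)]

/-- The edges of the disjoint union of the hypergraphs `S i` for `i` ranging over a
finite index set `B`. -/
def sigmaEdges (S : ∀ i, HGraph r (A i)) (B : Finset ι) :
    Finset (Finset (Σ i, A i)) :=
  B.biUnion fun i => (S i).edges.image (Finset.image (Sigma.mk i))

lemma sigmaEdges_card (S : ∀ i, HGraph r (A i)) (B : Finset ι) :
    ∀ f ∈ sigmaEdges S B, f.card = r := by
  intro f hf
  simp only [sigmaEdges, Finset.mem_biUnion, Finset.mem_image] at hf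
  obtain ⟨i, -, g, hg, rfl⟩ := hf
  rw [Finset.card_image_of_injective _ sigma_mk_injective]
  exact (S i).uniform g hg

/-- The disjoint union of the hypergraphs `S i`. -/
def sigmaHG [Fintype ι] (S : ∀ i, HGraph r (A i)) : HGraph r (Σ i, A i) :=
  ⟨sigmaEdges S Finset.univ, sigmaEdges_card S Finset.univ⟩

/-- The disjoint union of the sub-collection `{S i : i ∈ B}`, on its own vertex set. -/
def sigmaRestrict [Fintype ι] (S : ∀ i, HGraph r (A i)) (B : Finset ι) :
    HGraph r (Σ i : {j // j ∈ B}, A i.1) :=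
  sigmaHG (fun i : {j // j ∈ B} => S i.1)

/-- The vertex set of the disjoint union of `{S i : i ∈ B}`, viewed inside `Σ i, A i`. -/
def sigmaVerts [∀ i, Fintype (A i)] (B : Finset ι) : Finset (Σ i, A i) :=
  B.biUnion fun i => (Finset.univ : Finset (A i)).image (Sigma.mk i)

/-! Homomorphisms out of a disjoint union factor over its components, so
`hom(M, H) = ∏ᵢ hom(Sᵢ, H)` and the ratio in the theorem is `∏_{i ∈ B} hom(Sᵢ, H)`.
Each factor is at least `t_{K}(H)^{e(Sᵢ)} · n^{v(Sᵢ)}` because `Sᵢ` is Sidorenko, and since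
edges are nonempty (`r ≥ 1`), the edges of `M` meeting `V(M')` are exactly those of the
`Sᵢ` with `i ∈ B`. -/

lemma HGraph.nonempty_of_mem_edges (hr : 1 ≤ r) (G : HGraph r α) {e : Finset α}
    (he : e ∈ G.edges) : e.Nonempty :=
  card_pos.1 (by rw [G.uniform e he]; omega)

lemma edgeDensity_nonneg [Fintype β] [DecidableEq β] (H : HGraph r β) : 0 ≤ edgeDensity H := by
  unfold edgeDensity homDensity
  positivity

lemma IsSidorenko.pow_mul_le_homCount [Fintype α] [DecidableEq α] [Fintype β] [DecidableEq β]
    {F : HGraph r α} (hF : IsSidorenko F) (H : HGraph r β) :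
    edgeDensity H ^ #F.edges * (Fintype.card β : ℝ) ^ Fintype.card α ≤ homCount F H := by
  have h := hF β H
  rw [homDensity] at h
  rcases (by positivity : (0 : ℝ) ≤ (Fintype.card β : ℝ) ^ Fintype.card α).eq_or_lt with h0 | h0
  · rw [← h0, mul_zero]
    positivity
  · rwa [← le_div_iff₀ h0]

section DisjointUnion

variable [Fintype ι] [∀ i, Fintype (A i)] [Fintype β] [DecidableEq β]

lemma mem_homFinset_sigmaHG (S : ∀ i, HGraph r (A i)) (H : HGraph r β) (φ : (Σ i, A i) → β) :
    φ ∈ homFinset (sigmaHG S) H ↔ ∀ i, (fun a => φ ⟨i, a⟩) ∈ homFinset (S i) H := by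
  simp only [homFinset, mem_filter, mem_univ, true_and, sigmaHG, sigmaEdges, mem_biUnion,
    mem_image]
  constructor
  · intro h i e he
    have := h _ ⟨i, e, he, rfl⟩
    rwa [image_image] at this
  · rintro h f ⟨i, e, he, rfl⟩
    rw [image_image]
    exact h i e he

lemma homCount_sigmaHG (S : ∀ i, HGraph r (A i)) (H : HGraph r β) :
    homCount (sigmaHG S) H = ∏ i, homCount (S i) H := by
  simp only [homCount]
  rw [← Fintype.card_piFinset]
  refine card_nbij' (fun φ i a => φ ⟨i, a⟩) (fun f p => f p.1 p.2) ?_ ?_ (fun _ _ => rfl)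
    (fun _ _ => rfl)
  · intro φ hφ
    simpa [Fintype.mem_piFinset] using (mem_homFinset_sigmaHG S H φ).1 hφ
  · intro f hf
    rw [mem_coe, Fintype.mem_piFinset] at hf
    exact (mem_homFinset_sigmaHG S H _).2 hf

lemma homCount_sigmaRestrict (S : ∀ i, HGraph r (A i)) (B : Finset ι) (H : HGraph r β) :
    homCount (sigmaRestrict S B) H = ∏ i ∈ B, homCount (S i) H := by
  rw [sigmaRestrict, homCount_sigmaHG]
  exact prod_coe_sort B fun i => homCount (S i) H

end DisjointUnion

lemma mem_sigmaVerts [∀ i, Fintype (A i)] {B : Finset ι} {v : Σ i, A i} :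
    v ∈ sigmaVerts B ↔ v.1 ∈ B := by
  simp only [sigmaVerts, mem_biUnion, mem_image, mem_univ, true_and]
  exact ⟨by rintro ⟨i, hi, a, rfl⟩; exact hi, fun h => ⟨v.1, h, v.2, rfl⟩⟩

lemma degNear_sigmaHG_sigmaVerts [Fintype ι] [∀ i, Fintype (A i)] (hr : 1 ≤ r)
    (S : ∀ i, HGraph r (A i)) (B : Finset ι) :
    degNear (sigmaHG S) (sigmaVerts B) = #(sigmaEdges S B) := by
  rw [degNear]
  congr 1
  ext f
  simp only [sigmaHG, sigmaEdges, mem_filter, mem_biUnion, mem_univ, true_and, mem_image]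
  constructor
  · rintro ⟨⟨i, e, he, rfl⟩, v, hv, hvf⟩
    obtain ⟨a, -, rfl⟩ := mem_image.1 hvf
    exact ⟨i, mem_sigmaVerts.1 hv, e, he, rfl⟩
  · rintro ⟨i, hi, e, he, rfl⟩
    obtain ⟨a, ha⟩ := (S i).nonempty_of_mem_edges hr he
    exact ⟨⟨i, e, he, rfl⟩, ⟨i, a⟩, mem_sigmaVerts.2 hi, mem_image_of_mem _ ha⟩

lemma card_sigmaEdges (hr : 1 ≤ r) (S : ∀ i, HGraph r (A i)) (B : Finset ι) :
    #(sigmaEdges S B) = ∑ i ∈ B, #((S i).edges) := by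
  rw [sigmaEdges, card_biUnion]
  · exact sum_congr rfl fun i _ =>
      card_image_of_injective _ (image_injective sigma_mk_injective)
  · intro i _ j _ hij
    simp only [disjoint_left, mem_image]
    rintro f ⟨e, -, rfl⟩ ⟨e', he', hf⟩
    obtain ⟨a, ha⟩ := (S j).nonempty_of_mem_edges hr he'
    obtain ⟨b, -, hb⟩ := mem_image.1 (hf ▸ mem_image_of_mem (Sigma.mk j) ha)
    exact hij (congrArg Sigma.fst hb)

theorem stmt2 {r : ℕ} (hr : 1 ≤ r) {ι : Type} [Fintype ι] [DecidableEq ι]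
    {A : ι → Type} [∀ i, Fintype (A i)] [∀ i, DecidableEq (A i)]
    (S : ∀ i, HGraph r (A i)) (hS : ∀ i, IsSidorenko (S i))
    (B : Finset ι)
    {β : Type} [Fintype β] [DecidableEq β] (H : HGraph r β)
    (hpos : 0 < homCount (sigmaRestrict S Bᶜ) H) :
    (homCount (sigmaHG S) H : ℝ) / (homCount (sigmaRestrict S Bᶜ) H : ℝ) ≥
      edgeDensity H ^ degNear (sigmaHG S) (sigmaVerts B) *
        (Fintype.card β : ℝ) ^ (∑ i ∈ B, Fintype.card (A i)) := by
  have hsplit : (homCount (sigmaHG S) H : ℝ) =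
      (∏ i ∈ B, (homCount (S i) H : ℝ)) * homCount (sigmaRestrict S Bᶜ) H := by
    rw [homCount_sigmaHG, homCount_sigmaRestrict, ← prod_mul_prod_compl B]
    push_cast
    rfl
  rw [ge_iff_le, hsplit, mul_div_cancel_right₀ _ (by exact_mod_cast hpos.ne'),
    degNear_sigmaHG_sigmaVerts hr, card_sigmaEdges hr, ← prod_pow_eq_pow_sum,
    ← prod_pow_eq_pow_sum, ← prod_mul_distrib]
  exact prod_le_prod (fun i _ => mul_nonneg (pow_nonneg (edgeDensity_nonneg H) _) (by positivity))
    fun i _ => (hS i).pow_mul_le_homCount H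
end

section
/- Let r ≥ 2, let M be a dominating (r−1)-graph, and let F be an r-partite r-graph whose link profile (with respect to the r-th part, with vertices v₁,…,v_t) satisfies L_F(v₁) = M and each L_F(v_i) is a sub-hypergraph of M. Then the Sidorenko exponent of F satisfies s(F) ≤ Σ_{i=1}^t d_M(V(L_F(v_i))). -/
open Finset

variable {r : ℕ} {α β γ : Type}

/-- `M` is a dominating hypergraph: for every sub-hypergraph `M'` of `M` with at least
one edge (given by a nonempty subset `E'` of the edges of `M`) and every `r`-graph `H`,
`t_M(H)^{1/e(M)} ≥ t_{M'}(H)^{1/e(M')}`. -/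
def IsDominating [Fintype α] [DecidableEq α] (M : HGraph r α) : Prop :=
  ∀ (E' : Finset (Finset α)) (hsub : E' ⊆ M.edges), E'.Nonempty →
    ∀ (β : Type) [Fintype β] [DecidableEq β] (H : HGraph r β),
      homDensity M H ^ ((M.edges.card : ℝ)⁻¹) ≥
        homDensity (⟨E', fun e he => M.uniform e (hsub he)⟩ : HGraph r α) H ^
          ((E'.card : ℝ)⁻¹)

/-- `M − B`: delete the vertices of `B` from `M` (keeping the edges avoiding `B`). -/
def HGraph.delete [DecidableEq α] (M : HGraph r α) (B : Finset α) :
    HGraph r {x : α // x ∉ B} where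
  edges := (M.edges.filter fun e => ∀ v ∈ e, v ∉ B).image (Finset.subtype fun x => x ∉ B)
  uniform := by
    intro e he
    simp only [Finset.mem_image, Finset.mem_filter] at he
    obtain ⟨f, ⟨hf, hfB⟩, rfl⟩ := he
    rw [Finset.card_subtype, Finset.filter_true_of_mem hfB]
    exact M.uniform f hf
/-- Given `(r-1)`-uniform edge sets `E i` (the prescribed link hypergraphs of the `t`
vertices of the `r`-th part), the `r`-graph on `α ⊕ Fin t` whose link profile is
`(E 0, …, E (t-1))`. -/
def linkCone {k t : ℕ} {α : Type} [DecidableEq α] (E : Fin t → Finset (Finset α))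
    (hE : ∀ i, ∀ f ∈ E i, f.card = k) : HGraph (k + 1) (α ⊕ Fin t) where
  edges := Finset.univ.biUnion fun i : Fin t =>
    (E i).image fun f => insert (Sum.inr i) (f.image Sum.inl)
  uniform := by
    intro e he
    simp only [Finset.mem_biUnion, Finset.mem_image] at he
    obtain ⟨i, -, f, hf, rfl⟩ := he
    rw [Finset.card_insert_of_notMem (by simp),
      Finset.card_image_of_injective _ Sum.inl_injective, hE i f hf]

/-!
Entropy argument. Let `H` be an `r`-graph on `n` vertices with edge density `p > 0`, let
`e = e(M)`, and for a vertex `b` of `H` let `W_b` be the density of `M` in the link of `b`.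
Pick `b` with probability proportional to `u_b = W_b^{1/e}`, then a homomorphism `φ` from `M`
to the link of `b` uniformly at random, and call the law of `(b, φ)` `ρ`. Gibbs' inequality
gives `log hom(F, H) ≥ H(ρ) + Σ_{i ≥ 1} E_ρ log N_i(φ)`, where `N_i(φ)` counts the images of
`v_i` compatible with `φ`.

With `S = Σ_b u_b` and `L = E_b log W_b`, domination by single edges gives `S ≥ n p` and
Jensen gives `L ≥ e (log S - log n)`, so `log S + (d - 1) L / e ≥ log n + d log p` for every
`d ≥ 1`. The entropy `H(ρ) = v(M) log n + log S + (1 - 1/e) L` is the case `d = e`. For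
`A = L_F(v_i)` with vertex set `V` and `d = d_M(V)`, `N_i(φ)` depends only on `ψ = φ|_V`, so
`E log N_i ≥ H(b | ψ) ≥ H(b, ψ) - |V| log n`, while domination applied to the edges of `M`
missing `V` bounds `H(φ | b, ψ)`; together `E log N_i ≥ log S + (d - 1) L / e`. Summing,
`hom(F, H) ≥ n^{v(F)} p^{Σ d_i}`, which bounds `s(F)` because `p < 1`.
-/

open Real

section Entropy

variable {ι κ : Type*}

theorem sum_negMulLog_add_sum_mul_log_le {s : Finset ι} {w t : ι → ℝ}
    (hw : ∀ i ∈ s, 0 ≤ w i) (ht : ∀ i ∈ s, 0 ≤ t i) (hwt : ∀ i ∈ s, w i ≠ 0 → 0 < t i) :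
    ∑ i ∈ s, negMulLog (w i) + ∑ i ∈ s, w i * log (t i) ≤
      negMulLog (∑ i ∈ s, w i) + (∑ i ∈ s, w i) * log (∑ i ∈ s, t i) := by
  rcases (sum_nonneg hw).eq_or_lt with hW | hW
  · have hw0 : ∀ i ∈ s, w i = 0 := (sum_eq_zero_iff_of_nonneg hw).1 hW.symm
    rw [← hW, sum_eq_zero fun i hi => by rw [hw0 i hi, negMulLog_zero],
      sum_eq_zero fun i hi => by rw [hw0 i hi, zero_mul]]
    simp
  set W := ∑ i ∈ s, w i
  set T := ∑ i ∈ s, t i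
  obtain ⟨j, hj, hwj⟩ : ∃ j ∈ s, (0 : ℝ) < w j :=
    exists_lt_of_sum_lt (by rwa [sum_const_zero])
  have hT : 0 < T := (hwt j hj hwj.ne').trans_le (single_le_sum ht hj)
  -- `log x ≤ x - 1` at `x = t W / (w T)`
  have key : ∀ i ∈ s, negMulLog (w i) + w i * log (t i) - w i * (log T - log W) ≤
      t i * W / T - w i := by
    intro i hi
    rcases (hw i hi).eq_or_lt with h | h
    · rw [← h, negMulLog_zero, zero_mul, zero_mul, add_zero, sub_zero, sub_zero]
      exact div_nonneg (mul_nonneg (ht i hi) hW.le) hT.le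
    have hti := hwt i hi h.ne'
    have hlog := log_le_sub_one_of_pos (div_pos (mul_pos hti hW) (mul_pos h hT))
    rw [log_div (mul_pos hti hW).ne' (mul_pos h hT).ne', log_mul hti.ne' hW.ne',
      log_mul h.ne' hT.ne'] at hlog
    calc negMulLog (w i) + w i * log (t i) - w i * (log T - log W)
        = w i * (log (t i) + log W - (log (w i) + log T)) := by rw [negMulLog]; ring
      _ ≤ w i * (t i * W / (w i * T) - 1) := mul_le_mul_of_nonneg_left hlog h.le
      _ = t i * W / T - w i := by field_simp
  have hsum := sum_le_sum key
  rw [sum_sub_distrib, sum_add_distrib, ← sum_mul, sum_sub_distrib, ← sum_div, ← sum_mul,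
    mul_div_cancel_left₀ _ hT.ne', sub_self] at hsum
  rw [negMulLog]
  linarith [mul_sub W (log T) (log W)]

variable [DecidableEq κ]

def marginal (s : Finset ι) (w : ι → ℝ) (f : ι → κ) (y : κ) : ℝ :=
  ∑ i ∈ s with f i = y, w i

theorem sum_marginal_mul (s : Finset ι) (w : ι → ℝ) (f : ι → κ) (g : κ → ℝ) :
    ∑ y ∈ s.image f, marginal s w f y * g y = ∑ i ∈ s, w i * g (f i) := by
  rw [← sum_fiberwise_of_maps_to (fun i hi => mem_image_of_mem f hi)]
  refine sum_congr rfl fun y _ => ?_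
  rw [marginal, sum_mul]
  exact sum_congr rfl fun i hi => by rw [(mem_filter.1 hi).2]

theorem sum_marginal (s : Finset ι) (w : ι → ℝ) (f : ι → κ) :
    ∑ y ∈ s.image f, marginal s w f y = ∑ i ∈ s, w i := by
  simpa using sum_marginal_mul s w f 1

theorem marginal_nonneg {s : Finset ι} {w : ι → ℝ} (hw : ∀ i ∈ s, 0 ≤ w i) (f : ι → κ) (y : κ) :
    0 ≤ marginal s w f y :=
  sum_nonneg fun i hi => hw i (mem_filter.1 hi).1

theorem sum_negMulLog_le_sum_negMulLog_marginal_add (s : Finset ι) (f : ι → κ) {w : ι → ℝ}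
    (hw : ∀ i ∈ s, 0 ≤ w i) :
    ∑ i ∈ s, negMulLog (w i) ≤ ∑ y ∈ s.image f, negMulLog (marginal s w f y) +
      ∑ i ∈ s, w i * log #{j ∈ s | f j = f i} := by
  rw [← sum_marginal_mul s w f fun y => log #{j ∈ s | f j = y}, ← sum_add_distrib,
    ← sum_fiberwise_of_maps_to (fun i hi => mem_image_of_mem f hi)]
  refine sum_le_sum fun y _ => ?_
  have := sum_negMulLog_add_sum_mul_log_le (s := {i ∈ s | f i = y}) (w := w) (t := 1)
    (fun i hi => hw i (mem_filter.1 hi).1) (fun _ _ => zero_le_one) (fun _ _ _ => one_pos)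
  simpa [marginal] using this

theorem sum_negMulLog_marginal_le_marginal_add {μ : Type*} [DecidableEq μ] (s : Finset ι)
    (f : ι → κ) (g : κ → μ) {w : ι → ℝ} (hw : ∀ i ∈ s, 0 ≤ w i) :
    ∑ y ∈ s.image f, negMulLog (marginal s w f y) ≤
      ∑ z ∈ (s.image f).image g, negMulLog (marginal (s.image f) (marginal s w f) g z) +
        ∑ i ∈ s, w i * log #{y ∈ s.image f | g y = g (f i)} := by
  rw [← sum_marginal_mul s w f fun y => log #{y' ∈ s.image f | g y' = g y}]
  exact sum_negMulLog_le_sum_negMulLog_marginal_add _ g fun y _ => marginal_nonneg hw f y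

end Entropy

section Restrict

variable [Fintype α] [DecidableEq α] [Fintype β] [DecidableEq β]

theorem card_fiber_restrict_mul_pow {V : Finset α} {Q : (α → β) → Prop} [DecidablePred Q]
    (hQ : ∀ φ φ', (∀ a ∉ V, φ a = φ' a) → (Q φ ↔ Q φ')) (ψ : V → β) :
    #{φ | Q φ ∧ V.restrict φ = ψ} * Fintype.card β ^ #V = #{φ | Q φ} := by
  let override (χ : V → β) (φ : α → β) : α → β := fun a => if h : a ∈ V then χ ⟨a, h⟩ else φ a
  have hover : ∀ χ φ, ∀ a ∉ V, override χ φ a = φ a := fun χ φ a ha => dif_neg ha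
  have hmaps : ∀ χ χ' φ, Q φ ∧ V.restrict φ = χ →
      Q (override χ' φ) ∧ V.restrict (override χ' φ) = χ' := fun χ χ' φ h =>
    ⟨(hQ _ _ (hover χ' φ)).2 h.1, funext fun a => dif_pos a.2⟩
  have hinv : ∀ χ χ' φ, V.restrict φ = χ → override χ (override χ' φ) = φ := by
    intro χ χ' φ h
    funext a
    by_cases ha : a ∈ V
    · simp only [override, dif_pos ha, ← h, Finset.restrict]
    · simp only [override, dif_neg ha]
  have hfiber : ∀ χ, #{φ | Q φ ∧ V.restrict φ = χ} = #{φ | Q φ ∧ V.restrict φ = ψ} := by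
    intro χ
    refine card_nbij' (override ψ) (override χ) ?_ ?_ ?_ ?_
    · intro φ hφ; simpa using hmaps χ ψ φ (by simpa using hφ)
    · intro φ hφ; simpa using hmaps ψ χ φ (by simpa using hφ)
    · intro φ hφ; exact hinv χ ψ φ (mem_filter.1 hφ).2.2
    · intro φ hφ; exact hinv ψ χ φ (mem_filter.1 hφ).2.2
  calc #{φ | Q φ ∧ V.restrict φ = ψ} * Fintype.card β ^ #V
      = ∑ χ : V → β, #{φ | Q φ ∧ V.restrict φ = χ} := by
        simp only [hfiber, sum_const, card_univ, Fintype.card_fun, Fintype.card_coe, smul_eq_mul,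
          mul_comm]
    _ = #{φ | Q φ} := by
        rw [card_eq_sum_card_fiberwise (s := {φ | Q φ}) (f := V.restrict) (t := univ)
          fun _ _ => mem_univ _]
        simp only [filter_filter]

theorem card_filter_restrict_mul_pow {V : Finset α} (P : (V → β) → Prop) [DecidablePred P] :
    #{φ : α → β | P (V.restrict φ)} * Fintype.card β ^ #V =
      #{ψ | P ψ} * Fintype.card β ^ Fintype.card α := by
  have hfiber : ∀ ψ : V → β, #{φ : α → β | V.restrict φ = ψ} * Fintype.card β ^ #V =
      Fintype.card β ^ Fintype.card α := by
    intro ψ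
    simpa using card_fiber_restrict_mul_pow (Q := fun _ => True) (fun _ _ _ => Iff.rfl) ψ
  rw [card_eq_sum_card_fiberwise (f := V.restrict) (t := {ψ | P ψ}) fun φ hφ => by simpa using hφ,
    sum_mul, card_eq_sum_ones {ψ | P ψ}, sum_mul]
  refine sum_congr rfl fun ψ hψ => ?_
  rw [one_mul, ← hfiber ψ, filter_filter]
  congr 2
  exact filter_congr fun φ _ => and_iff_right_of_imp fun h => h ▸ (mem_filter.1 hψ).2

end Restrict

section Density

variable [Fintype α] [DecidableEq α] [Fintype β] [DecidableEq β]

theorem homDensity_le_one (F : HGraph r α) (G : HGraph r β) : homDensity F G ≤ 1 := by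
  rw [homDensity]
  refine div_le_one_of_le₀ ?_ (by positivity)
  exact_mod_cast (card_le_univ _).trans_eq (by simp)

omit [Fintype α] in
theorem homCount_KEdge {k : ℕ} {V : Finset α} (hV : #V = k) (G : HGraph k β) :
    homCount (KEdge k) G = #{ψ : V → β | univ.image ψ ∈ G.edges} := by
  refine card_equiv (Equiv.arrowCongr (V.equivFinOfCardEq hV).symm (Equiv.refl β)) fun g => ?_
  simp only [homFinset, KEdge, mem_singleton, forall_eq, mem_filter, mem_univ, true_and]
  change _ ↔ univ.image (g ∘ V.equivFinOfCardEq hV) ∈ G.edges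
  rw [← image_image, image_univ_equiv]

theorem homDensity_singleton [Nonempty β] {k : ℕ} {f : Finset α} (hf : #f = k)
    (h : ∀ e ∈ ({f} : Finset (Finset α)), #e = k) (G : HGraph k β) :
    homDensity ⟨{f}, h⟩ G = edgeDensity G := by
  have hcount : homCount ⟨{f}, h⟩ G * Fintype.card β ^ k =
      homCount (KEdge k) G * Fintype.card β ^ Fintype.card α := by
    subst hf
    rw [homCount_KEdge rfl, ← card_filter_restrict_mul_pow]
    have himage : ∀ φ : α → β, univ.image (f.restrict φ) = f.image φ := fun φ => by
      ext; simp [Finset.restrict]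
    congr 2
    simp only [homCount, homFinset, mem_singleton, forall_eq, himage]
  have hn : (0 : ℝ) < Fintype.card β := by exact_mod_cast Fintype.card_pos
  rw [edgeDensity, homDensity, homDensity, Fintype.card_fin, div_eq_div_iff (by positivity)
    (by positivity)]
  exact_mod_cast hcount

theorem IsDominating.homDensity_le_rpow {k : ℕ} {M : HGraph k α} (hM : IsDominating M)
    {E' : Finset (Finset α)} (hE' : E' ⊆ M.edges) (G : HGraph k β) :
    homDensity ⟨E', fun e he => M.uniform e (hE' he)⟩ G ≤
      homDensity M G ^ ((#E' : ℝ) / #M.edges) := by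
  rcases E'.eq_empty_or_nonempty with rfl | hne
  · simpa using homDensity_le_one _ G
  have hm : (0 : ℝ) < #E' := by exact_mod_cast hne.card_pos
  have hdom := pow_le_pow_left₀ (by unfold homDensity; positivity)
    (hM E' hE' hne β G) #E'
  rwa [← rpow_natCast, ← rpow_natCast, ← rpow_mul (by unfold homDensity; positivity),
    ← rpow_mul (by unfold homDensity; positivity), inv_mul_cancel₀ hm.ne', rpow_one,
    ← div_eq_inv_mul] at hdom

theorem edgeDensity_lt_one (hr : 2 ≤ r) (H : HGraph r β) : edgeDensity H < 1 := by
  rcases isEmpty_or_nonempty β with hβ | ⟨⟨b⟩⟩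
  · simp [edgeDensity, homDensity, Fintype.card_eq_zero, zero_pow (by omega : r ≠ 0)]
  have hconst : (fun _ => b) ∉ homFinset (KEdge r) H := by
    intro hmem
    have := H.uniform _ ((mem_filter.1 hmem).2 univ (mem_singleton_self _))
    rw [image_const (univ_nonempty_iff.2 ⟨⟨0, by omega⟩⟩), card_singleton] at this
    omega
  have hlt : homCount (KEdge r) H < Fintype.card β ^ r :=
    (card_lt_univ_of_notMem hconst).trans_eq (by simp)
  have hn : (0 : ℝ) < Fintype.card β := by exact_mod_cast Fintype.card_pos_iff.2 ⟨b⟩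
  rw [edgeDensity, homDensity, Fintype.card_fin, div_lt_one (by positivity)]
  exact_mod_cast hlt

end Density

section DegNear

variable {k : ℕ} [DecidableEq α] {M : HGraph k α}

theorem one_le_degNear_edgeSupport (hk : 1 ≤ k) {A : Finset (Finset α)} (hA : A ⊆ M.edges)
    (hAne : A.Nonempty) : 1 ≤ degNear M (edgeSupport A) := by
  obtain ⟨f, hf⟩ := hAne
  obtain ⟨a, ha⟩ := card_pos.1 ((M.uniform f (hA hf)).symm ▸ hk : 0 < #f)
  exact card_pos.2 ⟨f, mem_filter.2 ⟨hA hf, a, mem_biUnion.2 ⟨f, hf, ha⟩, ha⟩⟩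

theorem degNear_edgeSupport_edges (hk : 1 ≤ k) : degNear M (edgeSupport M.edges) = #M.edges := by
  refine congrArg card (filter_true_of_mem fun f hf => ?_)
  obtain ⟨a, ha⟩ := card_pos.1 ((M.uniform f hf).symm ▸ hk : 0 < #f)
  exact ⟨a, mem_biUnion.2 ⟨f, hf, ha⟩, ha⟩

end DegNear

namespace HGraph

section Link

variable {k : ℕ} [DecidableEq β]

def link (H : HGraph (k + 1) β) (b : β) : HGraph k β where
  edges := {e ∈ H.edges | b ∈ e}.image (·.erase b)
  uniform := by
    simp only [mem_image, mem_filter]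
    rintro _ ⟨e, ⟨he, hb⟩, rfl⟩
    rw [card_erase_of_mem hb, H.uniform e he, Nat.add_sub_cancel]

theorem mem_link_edges {H : HGraph (k + 1) β} {b : β} {S : Finset β} (hS : #S ≤ k) :
    S ∈ (H.link b).edges ↔ insert b S ∈ H.edges := by
  simp only [link, mem_image, mem_filter]
  constructor
  · rintro ⟨e, ⟨he, hb⟩, rfl⟩
    rwa [insert_erase hb]
  · intro h
    have hb : b ∉ S := fun hb => by
      have := H.uniform _ h
      rw [insert_eq_of_mem hb] at this
      omega
    exact ⟨insert b S, ⟨h, mem_insert_self b S⟩, erase_insert hb⟩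

def IsConeHom (H : HGraph (k + 1) β) (A : Finset (Finset α)) (b : β) (φ : α → β) : Prop :=
  ∀ f ∈ A, insert b (f.image φ) ∈ H.edges

instance (H : HGraph (k + 1) β) (A : Finset (Finset α)) (b : β) (φ : α → β) :
    Decidable (H.IsConeHom A b φ) :=
  inferInstanceAs (Decidable (∀ f ∈ A, _))

theorem IsConeHom.mono {H : HGraph (k + 1) β} {A A' : Finset (Finset α)} {b : β} {φ : α → β}
    (h : H.IsConeHom A b φ) (hA : A' ⊆ A) : H.IsConeHom A' b φ :=
  fun f hf => h f (hA hf)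

theorem isConeHom_congr {H : HGraph (k + 1) β} {A : Finset (Finset α)} {b : β} {φ φ' : α → β}
    (h : ∀ f ∈ A, ∀ a ∈ f, φ a = φ' a) : H.IsConeHom A b φ ↔ H.IsConeHom A b φ' :=
  forall₂_congr fun f hf => by rw [image_congr fun a ha => h f hf a ha]

variable [Fintype β]

def apexes (H : HGraph (k + 1) β) (A : Finset (Finset α)) (φ : α → β) : Finset β :=
  {b | H.IsConeHom A b φ}

@[simp]
theorem apexes_empty (H : HGraph (k + 1) β) (φ : α → β) : H.apexes ∅ φ = univ :=
  filter_true_of_mem fun _ _ f hf => absurd hf (notMem_empty f)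

variable [DecidableEq α] [Fintype α]

def coneHoms (H : HGraph (k + 1) β) (A : Finset (Finset α)) (b : β) : Finset (α → β) :=
  {φ | H.IsConeHom A b φ}

theorem homFinset_link (H : HGraph (k + 1) β) {A : Finset (Finset α)} (hA : ∀ f ∈ A, #f = k)
    (b : β) : homFinset ⟨A, hA⟩ (H.link b) = H.coneHoms A b :=
  filter_congr fun _ _ => forall₂_congr fun f hf =>
    mem_link_edges (card_image_le.trans (hA f hf).le)

theorem homCount_linkCone (H : HGraph (k + 1) β) {t : ℕ} (E : Fin t → Finset (Finset α))
    (hE : ∀ i, ∀ f ∈ E i, #f = k) :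
    homCount (linkCone E hE) H = ∑ φ : α → β, ∏ i, #(H.apexes (E i) φ) := by
  have hhom : ∀ Φ : α ⊕ Fin t → β, (∀ e ∈ (linkCone E hE).edges, e.image Φ ∈ H.edges) ↔
      ∀ i, H.IsConeHom (E i) (Φ (Sum.inr i)) (Φ ∘ Sum.inl) := by
    intro Φ
    simp only [linkCone, mem_biUnion, mem_image, mem_univ, true_and, IsConeHom]
    constructor
    · intro h i f hf
      simpa [image_insert, image_image] using h _ ⟨i, f, hf, rfl⟩
    · rintro h _ ⟨i, f, hf, rfl⟩
      simpa [image_insert, image_image] using h i f hf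
  calc homCount (linkCone E hE) H
      = #{p : (α → β) × (Fin t → β) | p.2 ∈ Fintype.piFinset fun i => H.apexes (E i) p.1} :=
        card_equiv (Equiv.sumArrowEquivProdArrow _ _ _) fun Φ => by
          simp only [homFinset, hhom, mem_filter, mem_univ, true_and, apexes,
            Fintype.mem_piFinset, Equiv.sumArrowEquivProdArrow_apply_snd]
          rfl
    _ = ∑ φ : α → β, #(Fintype.piFinset fun i => H.apexes (E i) φ) := by
        rw [card_filter, Fintype.sum_prod_type]
        simp only [← card_filter, filter_mem_eq_inter, univ_inter]
    _ = ∑ φ : α → β, ∏ i, #(H.apexes (E i) φ) := by simp only [Fintype.card_piFinset]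

theorem sum_homCount_link (H : HGraph (k + 1) β) :
    ∑ b, homCount (KEdge k) (H.link b) = homCount (KEdge (k + 1)) H := by
  have himage : ∀ (b : β) (h : Fin k → β),
      univ.image (Fin.cons b h : Fin (k + 1) → β) = insert b (univ.image h) := by
    intro b h
    ext y
    simp [Fin.exists_fin_succ, eq_comm]
  calc ∑ b, homCount (KEdge k) (H.link b)
      = ∑ b, #{h : Fin k → β | insert b (univ.image h) ∈ H.edges} := by
        refine sum_congr rfl fun b _ => congrArg card (filter_congr fun h _ => ?_)
        simpa [KEdge] using mem_link_edges (card_image_le.trans_eq (card_fin k))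
    _ = #{p : β × (Fin k → β) | insert p.1 (univ.image p.2) ∈ H.edges} := by
        rw [card_filter, Fintype.sum_prod_type]
        simp only [← card_filter]
    _ = homCount (KEdge (k + 1)) H :=
        card_equiv (Fin.consEquiv fun _ => β) fun p => by
          simp [homFinset, KEdge, Fin.consEquiv, himage]

end Link

section TiltedWeight

variable {k : ℕ} [Fintype α] [DecidableEq α] [Fintype β] [DecidableEq β]
variable (H : HGraph (k + 1) β) (M : HGraph k α)

def conePairs (A : Finset (Finset α)) : Finset (β × (α → β)) :=
  {x | H.IsConeHom A x.1 x.2}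

noncomputable def linkMass (b : β) : ℝ :=
  homDensity M (H.link b) ^ (#M.edges : ℝ)⁻¹

noncomputable def apexWeight (b : β) : ℝ :=
  H.linkMass M b / ∑ b', H.linkMass M b'

-- The law on `conePairs M.edges` that picks the apex `b` with probability `apexWeight b`, then a
-- uniform element of `coneHoms M.edges b`.
noncomputable def tiltedWeight (x : β × (α → β)) : ℝ :=
  H.apexWeight M x.1 / #(H.coneHoms M.edges x.1)

noncomputable def tiltedLogDensity : ℝ :=
  ∑ b, H.apexWeight M b * log (homDensity M (H.link b))

theorem homDensity_link {A : Finset (Finset α)} (hA : ∀ f ∈ A, #f = k) (b : β) :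
    homDensity ⟨A, hA⟩ (H.link b) =
      #(H.coneHoms A b) / (Fintype.card β : ℝ) ^ Fintype.card α := by
  rw [homDensity, homCount, homFinset_link]

theorem homDensity_link_eq (b : β) :
    homDensity M (H.link b) =
      #(H.coneHoms M.edges b) / (Fintype.card β : ℝ) ^ Fintype.card α :=
  homDensity_link H M.uniform b

theorem sum_conePairs (A : Finset (Finset α)) (g : β → ℝ) :
    ∑ x ∈ H.conePairs A, g x.1 = ∑ b, #(H.coneHoms A b) * g b := by
  rw [conePairs, sum_filter, Fintype.sum_prod_type]
  refine sum_congr rfl fun b _ => ?_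
  rw [← sum_filter]
  dsimp only
  rw [sum_const, nsmul_eq_mul]
  rfl

theorem sum_conePairs_snd (A : Finset (Finset α)) (g : (α → β) → ℝ) :
    ∑ x ∈ H.conePairs A, g x.2 = ∑ φ, #(H.apexes A φ) * g φ := by
  rw [conePairs, sum_filter, Fintype.sum_prod_type_right]
  refine sum_congr rfl fun φ _ => ?_
  rw [← sum_filter]
  dsimp only
  rw [sum_const, nsmul_eq_mul]
  rfl

variable {H M}

theorem linkMass_nonneg (b : β) : 0 ≤ H.linkMass M b :=
  rpow_nonneg (by unfold homDensity; positivity) _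

theorem apexWeight_nonneg (b : β) : 0 ≤ H.apexWeight M b :=
  div_nonneg (linkMass_nonneg b) (sum_nonneg fun b _ => linkMass_nonneg b)

theorem tiltedWeight_nonneg (x : β × (α → β)) : 0 ≤ H.tiltedWeight M x :=
  div_nonneg (apexWeight_nonneg x.1) (Nat.cast_nonneg _)

theorem log_linkMass (b : β) :
    log (H.linkMass M b) = (#M.edges : ℝ)⁻¹ * log (homDensity M (H.link b)) := by
  rcases (show 0 ≤ homDensity M (H.link b) by unfold homDensity; positivity).eq_or_lt with h | h
  · rw [linkMass, ← h, log_zero, mul_zero]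
    rcases eq_or_ne (#M.edges : ℝ)⁻¹ 0 with he | he
    · rw [he, rpow_zero, log_one]
    · rw [zero_rpow he, log_zero]
  · exact log_rpow h _

theorem apexWeight_eq_zero (hM : M.edges.Nonempty) {b : β} (hb : #(H.coneHoms M.edges b) = 0) :
    H.apexWeight M b = 0 := by
  have hW : homDensity M (H.link b) = 0 := by
    rw [homDensity_link_eq, hb, Nat.cast_zero, zero_div]
  rw [apexWeight, linkMass, hW, zero_rpow (inv_ne_zero (by exact_mod_cast hM.card_pos.ne')),
    zero_div]

theorem sum_tiltedWeight_mul (hM : M.edges.Nonempty) (g : β → ℝ) :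
    ∑ x ∈ H.conePairs M.edges, H.tiltedWeight M x * g x.1 = ∑ b, H.apexWeight M b * g b := by
  simp only [tiltedWeight]
  rw [sum_conePairs H M.edges fun b => H.apexWeight M b / #(H.coneHoms M.edges b) * g b]
  refine sum_congr rfl fun b _ => ?_
  rcases eq_or_ne #(H.coneHoms M.edges b) 0 with hb | hb
  · rw [apexWeight_eq_zero hM hb]; simp
  · field_simp

theorem sum_apexWeight (hS : 0 < ∑ b, H.linkMass M b) : ∑ b, H.apexWeight M b = 1 := by
  simp only [apexWeight]
  rw [← sum_div, div_self hS.ne']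

theorem sum_tiltedWeight (hMne : M.edges.Nonempty) (hS : 0 < ∑ b, H.linkMass M b) :
    ∑ x ∈ H.conePairs M.edges, H.tiltedWeight M x = 1 := by
  simpa [sum_apexWeight hS] using sum_tiltedWeight_mul (H := H) hMne 1

theorem homDensity_link_pos {b : β} (hb : (H.coneHoms M.edges b).Nonempty) :
    0 < homDensity M (H.link b) := by
  have hn : 0 < Fintype.card β := Fintype.card_pos_iff.2 ⟨b⟩
  rw [homDensity_link_eq]
  exact div_pos (by exact_mod_cast hb.card_pos) (by positivity)

theorem card_mul_edgeDensity_le_sum_linkMass [Nonempty β] (hM : IsDominating M)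
    (hMne : M.edges.Nonempty) : Fintype.card β * edgeDensity H ≤ ∑ b, H.linkMass M b := by
  obtain ⟨f, hf⟩ := hMne
  have hn : (0 : ℝ) < Fintype.card β := by exact_mod_cast Fintype.card_pos
  calc Fintype.card β * edgeDensity H = ∑ b, edgeDensity (H.link b) := by
        simp only [edgeDensity, homDensity, Fintype.card_fin, ← sum_div]
        rw [← Nat.cast_sum, sum_homCount_link, pow_succ']
        field_simp
    _ ≤ ∑ b, H.linkMass M b := sum_le_sum fun b _ => by
        have := hM.homDensity_le_rpow (E' := {f}) (singleton_subset_iff.2 hf) (H.link b)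
        rwa [homDensity_singleton (M.uniform f hf), card_singleton, Nat.cast_one, one_div] at this

theorem sum_linkMass_pos [Nonempty β] (hM : IsDominating M) (hMne : M.edges.Nonempty)
    (hp : 0 < edgeDensity H) : 0 < ∑ b, H.linkMass M b :=
  (mul_pos (by exact_mod_cast Fintype.card_pos) hp).trans_le
    (card_mul_edgeDensity_le_sum_linkMass hM hMne)

theorem mul_log_sub_log_le_tiltedLogDensity (hMne : M.edges.Nonempty)
    (hS : 0 < ∑ b, H.linkMass M b) :
    #M.edges * (log (∑ b, H.linkMass M b) - log (Fintype.card β)) ≤ H.tiltedLogDensity M := by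
  have he : (0 : ℝ) < #M.edges := by exact_mod_cast hMne.card_pos
  have hjensen := sum_negMulLog_add_sum_mul_log_le (s := univ) (w := H.linkMass M) (t := 1)
    (fun b _ => linkMass_nonneg b) (fun _ _ => zero_le_one) (fun _ _ _ => one_pos)
  simp only [Pi.one_apply, log_one, mul_zero, sum_const_zero, add_zero, sum_const, card_univ,
    nsmul_eq_mul, mul_one, negMulLog, neg_mul, sum_neg_distrib, log_linkMass, mul_left_comm _
      (#M.edges : ℝ)⁻¹, ← mul_sum] at hjensen
  rw [inv_mul_le_iff₀ he] at hjensen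
  have hL : H.tiltedLogDensity M * ∑ b, H.linkMass M b =
      ∑ b, H.linkMass M b * log (homDensity M (H.link b)) := by
    simp only [tiltedLogDensity, apexWeight, sum_mul]
    exact sum_congr rfl fun b _ => by field_simp
  refine le_of_mul_le_mul_right ?_ hS
  rw [hL]
  linarith

theorem card_coneHoms_mul_negMulLog (hMne : M.edges.Nonempty) (hS : 0 < ∑ b, H.linkMass M b)
    (b : β) :
    #(H.coneHoms M.edges b) * negMulLog (H.apexWeight M b / #(H.coneHoms M.edges b)) =
      H.apexWeight M b * (log (∑ b, H.linkMass M b) +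
        (1 - (#M.edges : ℝ)⁻¹) * log (homDensity M (H.link b)) +
          Fintype.card α * log (Fintype.card β)) := by
  rcases eq_or_ne (H.apexWeight M b) 0 with h0 | h0
  · simp [h0]
  have hb : (H.coneHoms M.edges b).Nonempty :=
    nonempty_iff_ne_empty.2 fun h => h0 (apexWeight_eq_zero hMne (by rw [h, card_empty]))
  have hn : (0 : ℝ) < Fintype.card β := by exact_mod_cast Fintype.card_pos_iff.2 ⟨b⟩
  have hW := homDensity_link_pos hb
  have hc : (0 : ℝ) < #(H.coneHoms M.edges b) := by exact_mod_cast hb.card_pos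
  have hcW : (#(H.coneHoms M.edges b) : ℝ) =
      homDensity M (H.link b) * (Fintype.card β : ℝ) ^ Fintype.card α := by
    rw [homDensity_link_eq]
    field_simp
  have hlog : log (H.apexWeight M b) =
      (#M.edges : ℝ)⁻¹ * log (homDensity M (H.link b)) - log (∑ b, H.linkMass M b) := by
    rw [apexWeight, log_div (fun h => h0 (by rw [apexWeight, h, zero_div])) hS.ne',
      log_linkMass]
  rw [negMulLog, log_div h0 hc.ne', hlog, hcW, log_mul hW.ne' (by positivity), log_pow, ← hcW]
  field_simp
  ring

theorem sum_negMulLog_tiltedWeight (hMne : M.edges.Nonempty) (hS : 0 < ∑ b, H.linkMass M b) :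
    ∑ x ∈ H.conePairs M.edges, negMulLog (H.tiltedWeight M x) =
      log (∑ b, H.linkMass M b) + (1 - (#M.edges : ℝ)⁻¹) * H.tiltedLogDensity M +
        Fintype.card α * log (Fintype.card β) := by
  refine (sum_conePairs H M.edges fun b =>
    negMulLog (H.apexWeight M b / #(H.coneHoms M.edges b))).trans ?_
  rw [sum_congr rfl fun b _ => card_coneHoms_mul_negMulLog hMne hS b]
  simp only [mul_add, sum_add_distrib, ← sum_mul, sum_apexWeight hS, one_mul, tiltedLogDensity,
    mul_sum]
  congr 2
  exact sum_congr rfl fun b _ => by ring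

theorem log_card_coneHoms_le (hM : IsDominating M) {E' : Finset (Finset α)} (hE' : E' ⊆ M.edges)
    {b : β} (hb : (H.coneHoms M.edges b).Nonempty) :
    log #(H.coneHoms E' b) ≤ #E' / #M.edges * log (homDensity M (H.link b)) +
      Fintype.card α * log (Fintype.card β) := by
  have hn : (0 : ℝ) < Fintype.card β := by exact_mod_cast Fintype.card_pos_iff.2 ⟨b⟩
  have hW := homDensity_link_pos hb
  have hc : (0 : ℝ) < #(H.coneHoms E' b) := by
    refine Nat.cast_pos.2 (Nonempty.card_pos ?_)
    obtain ⟨φ, hφ⟩ := hb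
    exact ⟨φ, by simpa [coneHoms] using (mem_filter.1 hφ).2.mono hE'⟩
  have hdom := hM.homDensity_le_rpow hE' (H.link b)
  rw [homDensity_link] at hdom
  have := log_le_log (by positivity) hdom
  rw [log_div hc.ne' (by positivity), log_pow, log_rpow hW] at this
  linarith

end TiltedWeight

section ApexBound

variable {k : ℕ} [Fintype α] [DecidableEq α] [Fintype β] [DecidableEq β]
variable {H : HGraph (k + 1) β} {M : HGraph k α}

def restrictPair (V : Finset α) (x : β × (α → β)) : β × (V → β) := (x.1, V.restrict x.2)

theorem card_fiber_restrictPair_mul_le {V : Finset α} {x : β × (α → β)} :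
    #{x' ∈ H.conePairs M.edges | restrictPair V x' = restrictPair V x} * Fintype.card β ^ #V ≤
      #(H.coneHoms {f ∈ M.edges | ¬∃ v ∈ V, v ∈ f} x.1) := by
  set E' := {f ∈ M.edges | ¬∃ v ∈ V, v ∈ f}
  have hQ : ∀ φ φ' : α → β, (∀ a ∉ V, φ a = φ' a) →
      (H.IsConeHom E' x.1 φ ↔ H.IsConeHom E' x.1 φ') := fun φ φ' h =>
    isConeHom_congr fun f hf a ha => h a fun haV => (mem_filter.1 hf).2 ⟨a, haV, ha⟩
  rw [coneHoms, ← card_fiber_restrict_mul_pow hQ (V.restrict x.2)]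
  refine Nat.mul_le_mul_right _ (card_le_card_of_injOn Prod.snd ?_ ?_)
  · intro x' hx'
    simp only [coe_filter, conePairs, mem_filter, mem_univ, true_and, restrictPair,
      Prod.mk.injEq, Set.mem_ofPred_eq] at hx' ⊢
    obtain ⟨hM, h1, h2⟩ := hx'
    exact ⟨h1 ▸ hM.mono (filter_subset _ _), h2⟩
  · intro x' hx' x'' hx'' h
    simp only [coe_filter, restrictPair, Prod.mk.injEq, Set.mem_ofPred_eq] at hx' hx''
    exact Prod.ext (hx'.2.1.trans hx''.2.1.symm) h

theorem log_card_fiber_restrictPair_le {V : Finset α} {x : β × (α → β)}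
    (hx : x ∈ H.conePairs M.edges) :
    log #{x' ∈ H.conePairs M.edges | restrictPair V x' = restrictPair V x} ≤
      log #(H.coneHoms {f ∈ M.edges | ¬∃ v ∈ V, v ∈ f} x.1) - #V * log (Fintype.card β) := by
  have hn : (0 : ℝ) < Fintype.card β := by exact_mod_cast Fintype.card_pos_iff.2 ⟨x.1⟩
  have hpos : (0 : ℝ) < #{x' ∈ H.conePairs M.edges | restrictPair V x' = restrictPair V x} :=
    Nat.cast_pos.2 (card_pos.2 ⟨x, mem_filter.2 ⟨hx, rfl⟩⟩)
  have hcard : (#{x' ∈ H.conePairs M.edges | restrictPair V x' = restrictPair V x} : ℝ) *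
      (Fintype.card β : ℝ) ^ #V ≤ #(H.coneHoms {f ∈ M.edges | ¬∃ v ∈ V, v ∈ f} x.1) := by
    exact_mod_cast card_fiber_restrictPair_mul_le (H := H) (M := M) (V := V) (x := x)
  have := log_le_log (by positivity) hcard
  rw [log_mul hpos.ne' (by positivity), log_pow] at this
  linarith

theorem sum_tiltedWeight_mul_log_card_fiber_le (hM : IsDominating M) (hMne : M.edges.Nonempty)
    (hS : 0 < ∑ b, H.linkMass M b) (V : Finset α) :
    ∑ x ∈ H.conePairs M.edges, H.tiltedWeight M x *
        log #{x' ∈ H.conePairs M.edges | restrictPair V x' = restrictPair V x} ≤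
      (#M.edges - degNear M V) / #M.edges * H.tiltedLogDensity M +
        (Fintype.card α - #V) * log (Fintype.card β) := by
  set E' := {f ∈ M.edges | ¬∃ v ∈ V, v ∈ f}
  have hE' : (#E' : ℝ) = #M.edges - degNear M V := by
    rw [eq_sub_iff_add_eq, degNear, ← Nat.cast_add, add_comm, card_filter_add_card_filter_not]
  have hdom : ∀ b, H.apexWeight M b * (log #(H.coneHoms E' b) - #V * log (Fintype.card β)) ≤
      H.apexWeight M b * (#E' / #M.edges * log (homDensity M (H.link b)) +
        (Fintype.card α - #V) * log (Fintype.card β)) := by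
    intro b
    rcases eq_or_ne #(H.coneHoms M.edges b) 0 with hb | hb
    · rw [apexWeight_eq_zero hMne hb, zero_mul, zero_mul]
    refine mul_le_mul_of_nonneg_left ?_ (apexWeight_nonneg b)
    have := log_card_coneHoms_le (E' := E') hM (filter_subset _ _) (card_ne_zero.1 hb)
    linarith
  calc _ ≤ ∑ x ∈ H.conePairs M.edges, H.tiltedWeight M x *
          (log #(H.coneHoms E' x.1) - #V * log (Fintype.card β)) :=
        sum_le_sum fun x hx => mul_le_mul_of_nonneg_left (log_card_fiber_restrictPair_le hx)
          (tiltedWeight_nonneg x)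
    _ ≤ ∑ b, H.apexWeight M b * (#E' / #M.edges * log (homDensity M (H.link b)) +
          (Fintype.card α - #V) * log (Fintype.card β)) := by
        rw [sum_tiltedWeight_mul hMne fun b =>
          log #(H.coneHoms E' b) - #V * log (Fintype.card β)]
        exact sum_le_sum fun b _ => hdom b
    _ = _ := by
        simp only [mul_add, sum_add_distrib, ← sum_mul, sum_apexWeight hS, one_mul, hE',
          tiltedLogDensity, mul_sum]
        congr 1
        exact sum_congr rfl fun b _ => mul_left_comm _ _ _

theorem card_fiber_snd_le {A : Finset (Finset α)} (hA : A ⊆ M.edges) {V : Finset α}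
    (hAV : ∀ f ∈ A, f ⊆ V) (x : β × (α → β)) :
    #{y ∈ (H.conePairs M.edges).image (restrictPair V) | y.2 = V.restrict x.2} ≤
      #(H.apexes A x.2) := by
  refine card_le_card_of_injOn Prod.fst ?_ ?_
  · intro y hy
    simp only [coe_filter, mem_image, conePairs, mem_filter, mem_univ, true_and, restrictPair,
      Set.mem_ofPred_eq] at hy
    obtain ⟨⟨x', hx', rfl⟩, hres⟩ := hy
    simp only [apexes, coe_filter, mem_univ, true_and, Set.mem_ofPred_eq]
    refine (isConeHom_congr fun f hf a ha => ?_).1 (hx'.mono hA)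
    exact congrFun hres ⟨a, hAV f hf ha⟩
  · intro y hy y' hy' h
    simp only [coe_filter, Set.mem_ofPred_eq] at hy hy'
    exact Prod.ext h (hy.2.trans hy'.2.symm)

theorem sum_negMulLog_marginal_restrictPair_le (hMne : M.edges.Nonempty)
    (hS : 0 < ∑ b, H.linkMass M b)
    {A : Finset (Finset α)} (hA : A ⊆ M.edges) {V : Finset α} (hAV : ∀ f ∈ A, f ⊆ V) :
    ∑ y ∈ (H.conePairs M.edges).image (restrictPair V),
        negMulLog (marginal (H.conePairs M.edges) (H.tiltedWeight M) (restrictPair V) y) ≤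
      #V * log (Fintype.card β) +
        ∑ x ∈ H.conePairs M.edges, H.tiltedWeight M x * log #(H.apexes A x.2) := by
  refine (sum_negMulLog_marginal_le_marginal_add _ _ Prod.snd
    fun x _ => tiltedWeight_nonneg x).trans (add_le_add ?_ ?_)
  · set s := (H.conePairs M.edges).image (restrictPair V)
    set m := marginal (H.conePairs M.edges) (H.tiltedWeight M) (restrictPair V)
    have hsum : ∑ y ∈ s.image Prod.snd, marginal s m Prod.snd y = 1 := by
      rw [sum_marginal, sum_marginal, sum_tiltedWeight hMne hS]
    have h := sum_negMulLog_add_sum_mul_log_le (s := s.image Prod.snd)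
      (w := marginal s m Prod.snd) (t := 1)
      (fun y _ => marginal_nonneg (fun y _ =>
        marginal_nonneg (fun x _ => tiltedWeight_nonneg x) (restrictPair V) y) _ y)
      (fun _ _ => zero_le_one) (fun _ _ _ => one_pos)
    have hne : (s.image Prod.snd).Nonempty := nonempty_of_sum_ne_zero (hsum ▸ one_ne_zero)
    have hcard : (#(s.image Prod.snd) : ℝ) ≤ (Fintype.card β : ℝ) ^ #V := by
      exact_mod_cast (card_le_univ _).trans_eq (by simp)
    simp only [hsum, Pi.one_apply, log_one, mul_zero, sum_const_zero, add_zero, negMulLog_one,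
      zero_add, one_mul, sum_const, nsmul_eq_mul, mul_one] at h
    calc _ ≤ log #(s.image Prod.snd) := h
      _ ≤ log ((Fintype.card β : ℝ) ^ #V) := log_le_log (by exact_mod_cast hne.card_pos) hcard
      _ = _ := log_pow _ _
  · refine sum_le_sum fun x hx => mul_le_mul_of_nonneg_left ?_ (tiltedWeight_nonneg x)
    have hpos : 0 < #{y ∈ (H.conePairs M.edges).image (restrictPair V) |
        y.2 = (restrictPair V x).2} :=
      card_pos.2 ⟨restrictPair V x, mem_filter.2 ⟨mem_image_of_mem _ hx, rfl⟩⟩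
    exact log_le_log (by exact_mod_cast hpos) (by exact_mod_cast card_fiber_snd_le hA hAV x)

theorem log_add_mul_tiltedLogDensity_le (hM : IsDominating M) (hMne : M.edges.Nonempty)
    (hS : 0 < ∑ b, H.linkMass M b) {A : Finset (Finset α)} (hA : A ⊆ M.edges) :
    log (∑ b, H.linkMass M b) + (degNear M (edgeSupport A) - 1) / #M.edges * H.tiltedLogDensity M ≤
      ∑ x ∈ H.conePairs M.edges, H.tiltedWeight M x * log #(H.apexes A x.2) := by
  have hAV : ∀ f ∈ A, f ⊆ edgeSupport A := fun f hf a ha => mem_biUnion.2 ⟨f, hf, ha⟩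
  have hentropy := sum_negMulLog_tiltedWeight (H := H) hMne hS
  have hfiber := (sum_negMulLog_le_sum_negMulLog_marginal_add _ (restrictPair (edgeSupport A))
    fun x _ => tiltedWeight_nonneg x).trans
      (add_le_add le_rfl (sum_tiltedWeight_mul_log_card_fiber_le hM hMne hS (edgeSupport A)))
  have hmarginal := sum_negMulLog_marginal_restrictPair_le hMne hS hA hAV
  have he : (#M.edges : ℝ) ≠ 0 := by exact_mod_cast hMne.card_pos.ne'
  have hcoeff : (degNear M (edgeSupport A) - 1) / #M.edges * H.tiltedLogDensity M =
      (1 - (#M.edges : ℝ)⁻¹) * H.tiltedLogDensity M -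
        (#M.edges - degNear M (edgeSupport A)) / #M.edges * H.tiltedLogDensity M := by
    field_simp
    ring
  linarith

theorem log_card_add_mul_log_edgeDensity_le [Nonempty β] (hM : IsDominating M)
    (hMne : M.edges.Nonempty) (hp : 0 < edgeDensity H) {d : ℝ} (hd : 1 ≤ d) :
    log (Fintype.card β) + d * log (edgeDensity H) ≤
      log (∑ b, H.linkMass M b) + (d - 1) / #M.edges * H.tiltedLogDensity M := by
  have hn : (0 : ℝ) < Fintype.card β := by exact_mod_cast Fintype.card_pos
  have he : (0 : ℝ) < #M.edges := by exact_mod_cast hMne.card_pos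
  have hmass := card_mul_edgeDensity_le_sum_linkMass (H := H) hM hMne
  have hS := sum_linkMass_pos hM hMne hp
  have hlogS : log (Fintype.card β) + log (edgeDensity H) ≤ log (∑ b, H.linkMass M b) := by
    rw [← log_mul hn.ne' hp.ne']
    exact log_le_log (mul_pos hn hp) hmass
  have hL := mul_log_sub_log_le_tiltedLogDensity (H := H) hMne hS
  have hL' : (d - 1) * (log (∑ b, H.linkMass M b) - log (Fintype.card β)) ≤
      (d - 1) / #M.edges * H.tiltedLogDensity M := by
    rw [div_mul_eq_mul_div, le_div_iff₀ he, mul_assoc, mul_comm _ (#M.edges : ℝ)]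
    exact mul_le_mul_of_nonneg_left hL (by linarith)
  nlinarith [mul_le_mul_of_nonneg_left hlogS (show 0 ≤ d by linarith)]

theorem log_card_add_mul_log_edgeDensity_le_sum [Nonempty β] (hk : 1 ≤ k)
    (hM : IsDominating M) (hMne : M.edges.Nonempty) (hp : 0 < edgeDensity H)
    {A : Finset (Finset α)} (hA : A ⊆ M.edges) :
    log (Fintype.card β) + degNear M (edgeSupport A) * log (edgeDensity H) ≤
      ∑ x ∈ H.conePairs M.edges, H.tiltedWeight M x * log #(H.apexes A x.2) := by
  have hS := sum_linkMass_pos hM hMne hp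
  rcases A.eq_empty_or_nonempty with rfl | hAne
  · simp only [apexes_empty, card_univ]
    rw [← sum_mul, sum_tiltedWeight hMne hS]
    simp [degNear, edgeSupport]
  exact (log_card_add_mul_log_edgeDensity_le hM hMne hp
    (by exact_mod_cast one_le_degNear_edgeSupport hk hA hAne)).trans
    (log_add_mul_tiltedLogDensity_le hM hMne hS hA)

end ApexBound

section LinkCone

variable {k : ℕ} [Fintype α] [DecidableEq α] [Fintype β] [DecidableEq β]
variable {H : HGraph (k + 1) β} {M : HGraph k α} {t : ℕ} {E : Fin (t + 1) → Finset (Finset α)}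

theorem card_apexes_pos {A : Finset (Finset α)} (hA : A ⊆ M.edges) {x : β × (α → β)}
    (hx : x ∈ H.conePairs M.edges) : 0 < #(H.apexes A x.2) :=
  card_pos.2 ⟨x.1, mem_filter.2 ⟨mem_univ _, (mem_filter.1 hx).2.mono hA⟩⟩

theorem sum_conePairs_prod_card_apexes (hE0 : E 0 = M.edges) (hE : ∀ i, ∀ f ∈ E i, #f = k) :
    ∑ x ∈ H.conePairs M.edges, ∏ i : Fin t, (#(H.apexes (E i.succ) x.2) : ℝ) =
      homCount (linkCone E hE) H := by
  rw [sum_conePairs_snd H M.edges fun φ => ∏ i : Fin t, (#(H.apexes (E i.succ) φ) : ℝ),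
    homCount_linkCone, Nat.cast_sum]
  refine sum_congr rfl fun φ _ => ?_
  rw [Fin.prod_univ_succ, hE0, Nat.cast_mul, Nat.cast_prod]

theorem homCount_linkCone_pos (hMne : M.edges.Nonempty) (hS : 0 < ∑ b, H.linkMass M b)
    (hE0 : E 0 = M.edges) (hsub : ∀ i, E i ⊆ M.edges) :
    0 < homCount (linkCone E fun i f hf => M.uniform f (hsub i hf)) H := by
  have hP : (H.conePairs M.edges).Nonempty :=
    nonempty_of_sum_ne_zero ((sum_tiltedWeight hMne hS).symm ▸ one_ne_zero)
  rw [← Nat.cast_pos (α := ℝ), ← sum_conePairs_prod_card_apexes hE0]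
  exact sum_pos (fun x hx => prod_pos fun i _ =>
    Nat.cast_pos.2 (card_apexes_pos (hsub i.succ) hx)) hP

theorem sum_negMulLog_add_sum_le_log_homCount (hMne : M.edges.Nonempty)
    (hS : 0 < ∑ b, H.linkMass M b) (hE0 : E 0 = M.edges) (hsub : ∀ i, E i ⊆ M.edges) :
    ∑ x ∈ H.conePairs M.edges, negMulLog (H.tiltedWeight M x) +
        ∑ i : Fin t, ∑ x ∈ H.conePairs M.edges,
          H.tiltedWeight M x * log #(H.apexes (E i.succ) x.2) ≤
      log (homCount (linkCone E fun i f hf => M.uniform f (hsub i hf)) H) := by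
  have hcard : ∀ x ∈ H.conePairs M.edges, ∀ i : Fin t, (#(H.apexes (E i.succ) x.2) : ℝ) ≠ 0 :=
    fun x hx i => Nat.cast_ne_zero.2 (card_apexes_pos (hsub i.succ) hx).ne'
  have hgibbs := sum_negMulLog_add_sum_mul_log_le (s := H.conePairs M.edges)
    (w := H.tiltedWeight M) (t := fun x => ∏ i : Fin t, (#(H.apexes (E i.succ) x.2) : ℝ))
    (fun x _ => tiltedWeight_nonneg x) (fun x _ => prod_nonneg fun i _ => Nat.cast_nonneg _)
    (fun x hx _ => prod_pos fun i _ => (Nat.cast_nonneg _).lt_of_ne' (hcard x hx i))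
  rw [sum_tiltedWeight hMne hS, negMulLog_one, one_mul, zero_add,
    sum_conePairs_prod_card_apexes hE0 fun i f hf => M.uniform f (hsub i hf)] at hgibbs
  convert hgibbs using 2
  rw [sum_comm]
  refine sum_congr rfl fun x hx => ?_
  rw [log_prod fun i _ => hcard x hx i, mul_sum]

theorem log_homCount_linkCone_ge [Nonempty β] (hk : 1 ≤ k) (hM : IsDominating M)
    (hMne : M.edges.Nonempty) (hE0 : E 0 = M.edges) (hsub : ∀ i, E i ⊆ M.edges)
    (hp : 0 < edgeDensity H) :
    (Fintype.card α + (t + 1)) * log (Fintype.card β) +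
        (∑ i, (degNear M (edgeSupport (E i)) : ℝ)) * log (edgeDensity H) ≤
      log (homCount (linkCone E fun i f hf => M.uniform f (hsub i hf)) H) := by
  have hS := sum_linkMass_pos hM hMne hp
  have he : (#M.edges : ℝ) ≠ 0 := by exact_mod_cast hMne.card_pos.ne'
  have hbase : Fintype.card α * log (Fintype.card β) +
      (log (Fintype.card β) + #M.edges * log (edgeDensity H)) ≤
        ∑ x ∈ H.conePairs M.edges, negMulLog (H.tiltedWeight M x) := by
    have := log_card_add_mul_log_edgeDensity_le hM hMne hp (d := #M.edges)
      (by exact_mod_cast hMne.card_pos)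
    have hcoeff : (1 - (#M.edges : ℝ)⁻¹) * H.tiltedLogDensity M =
        (#M.edges - 1) / #M.edges * H.tiltedLogDensity M := by
      field_simp
    rw [sum_negMulLog_tiltedWeight hMne hS, hcoeff]
    linarith
  have hapex := sum_le_sum (s := univ) fun (i : Fin t) _ =>
    log_card_add_mul_log_edgeDensity_le_sum hk hM hMne hp (hsub i.succ)
  rw [sum_add_distrib, sum_const, card_univ, Fintype.card_fin, nsmul_eq_mul, ← sum_mul] at hapex
  have hgibbs := sum_negMulLog_add_sum_le_log_homCount hMne hS hE0 hsub
  rw [Fin.sum_univ_succ, hE0, degNear_edgeSupport_edges hk]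
  linarith

theorem edgeDensity_pow_le_homDensity_linkCone (hk : 1 ≤ k) (hM : IsDominating M)
    (hE0 : E 0 = M.edges) (hsub : ∀ i, E i ⊆ M.edges) (hp : 0 < edgeDensity H) :
    edgeDensity H ^ (∑ i, degNear M (edgeSupport (E i))) ≤
      homDensity (linkCone E fun i f hf => M.uniform f (hsub i hf)) H := by
  have : Nonempty β := by
    by_contra h
    rw [not_nonempty_iff] at h
    simp [edgeDensity, homDensity] at hp
  have hn : (0 : ℝ) < Fintype.card β := by exact_mod_cast Fintype.card_pos
  rw [homDensity, Fintype.card_sum, Fintype.card_fin, le_div_iff₀ (by positivity)]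
  rcases M.edges.eq_empty_or_nonempty with hMe | hMne
  · have hE : ∀ i, E i = ∅ := fun i => subset_empty.1 (hMe ▸ hsub i)
    simp [hE, degNear, edgeSupport, homCount_linkCone, pow_add]
  have hS := sum_linkMass_pos hM hMne hp
  have hpos : (0 : ℝ) < homCount (linkCone E fun i f hf => M.uniform f (hsub i hf)) H := by
    exact_mod_cast homCount_linkCone_pos hMne hS hE0 hsub
  rw [← log_le_log_iff (by positivity) hpos, log_mul (by positivity) (by positivity), log_pow,
    log_pow]
  have := log_homCount_linkCone_ge hk hM hMne hE0 hsub hp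
  push_cast at this ⊢
  linarith

end LinkCone

end HGraph

theorem sidorenkoExp_le_of_edgeDensity_pow_le [Fintype α] [DecidableEq α] {F : HGraph r α}
    (hr : 2 ≤ r) {D : ℕ}
    (h : ∀ n (H : HGraph r (Fin n)), 0 < edgeDensity H → edgeDensity H ^ D ≤ homDensity F H) :
    sidorenkoExp F ≤ D := by
  refine Real.sSup_le ?_ (Nat.cast_nonneg D)
  rintro s ⟨-, n, H, heq, hpos⟩
  rcases (show 0 ≤ edgeDensity H by unfold edgeDensity homDensity; positivity).eq_or_lt with hp | hp
  · rcases eq_or_ne s 0 with rfl | hs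
    · exact Nat.cast_nonneg D
    · rw [← hp, zero_rpow hs] at hpos
      exact absurd hpos (lt_irrefl 0)
  · have hD := h n H hp
    rw [heq, ← rpow_natCast] at hD
    exact (rpow_le_rpow_left_iff_of_base_lt_one hp (edgeDensity_lt_one hr H)).1 hD

/-- If `M` is a dominating `(r−1)`-graph and the `r`-graph `F` has link profile
`(E 0, …, E t)` with `E 0 = M` and each `E i` a sub-hypergraph of `M`, then
`s(F) ≤ Σᵢ d_M(V(L_F(vᵢ)))`. -/
theorem stmt6 {k : ℕ} (hk : 1 ≤ k) {t : ℕ} {α : Type} [Fintype α] [DecidableEq α]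
    (M : HGraph k α) (hM : IsDominating M)
    (E : Fin (t + 1) → Finset (Finset α)) (hE0 : E 0 = M.edges)
    (hsub : ∀ i, E i ⊆ M.edges) :
    sidorenkoExp (linkCone E (fun i f hf => M.uniform f (hsub i hf))) ≤
      ∑ i : Fin (t + 1), (degNear M (edgeSupport (E i)) : ℝ) := by
  have h := sidorenkoExp_le_of_edgeDensity_pow_le (F := linkCone E _) (by omega)
    fun n H hp => HGraph.edgeDensity_pow_le_homDensity_linkCone hk hM hE0 hsub hp
  exact_mod_cast h
end

section
/- For every integer k ≥ 2, the tensor product C_{2k} ⊗ C_{2k} contains the (k × k)-grid graph as a subgraph. Concretely, identifying V(C_{2k} ⊗ C_{2k}) with [2k] × [2k] where (i,j) is adjacent to (i',j') iff |i − i'| ≡ 1 (mod 2k) and |j − j'| ≡ 1 (mod 2k), the induced subgraph on U = {(k + i − j − 1, i + j − 1) : i, j ∈ [k]} (coordinates taken mod 2k) is isomorphic to the (k × k)-grid. -/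
/-- The tensor (categorical) product of two simple graphs:
`(a₁,b₁) ~ (a₂,b₂)` iff `a₁ ~ a₂` and `b₁ ~ b₂`. -/
def SimpleGraph.tensor {V W : Type*} (G : SimpleGraph V) (H : SimpleGraph W) :
    SimpleGraph (V × W) where
  Adj p q := G.Adj p.1 q.1 ∧ H.Adj p.2 q.2
  symm := by refine ⟨?_⟩; rintro p q ⟨h1, h2⟩; exact ⟨h1.symm, h2.symm⟩
  loopless := by refine ⟨?_⟩; rintro p ⟨h1, -⟩; exact G.loopless.irrefl _ h1

instance {V W : Type*} (G : SimpleGraph V) (H : SimpleGraph W)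
    [DecidableRel G.Adj] [DecidableRel H.Adj] : DecidableRel (G.tensor H).Adj :=
  fun p q => inferInstanceAs (Decidable (G.Adj p.1 q.1 ∧ H.Adj p.2 q.2))

/-- The cycle of length `n`, with vertex set `ZMod n` and `i ~ j` iff `i − j ≡ ±1`. -/
def cycleZMod (n : ℕ) : SimpleGraph (ZMod n) where
  Adj i j := i ≠ j ∧ (i - j = 1 ∨ j - i = 1)
  symm := by refine ⟨?_⟩; rintro i j ⟨hne, h⟩; exact ⟨hne.symm, h.symm⟩
  loopless := by refine ⟨?_⟩; rintro i ⟨hne, -⟩; exact hne rfl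

instance (n : ℕ) : DecidableRel (cycleZMod n).Adj :=
  fun i j => inferInstanceAs (Decidable (i ≠ j ∧ (i - j = 1 ∨ j - i = 1)))


/-- The `(k × k)`-grid: the Cartesian product of two paths on `k` vertices, on vertex
set `Fin k × Fin k` with `(i,j) ~ (i',j')` iff `|i−i'| + |j−j'| = 1`. -/
def gridGraph (k : ℕ) : SimpleGraph (Fin k × Fin k) where
  Adj p q := (p.1 = q.1 ∧ ((p.2 : ℕ) + 1 = q.2 ∨ (q.2 : ℕ) + 1 = p.2)) ∨
    (p.2 = q.2 ∧ ((p.1 : ℕ) + 1 = q.1 ∨ (q.1 : ℕ) + 1 = p.1))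
  symm := by
    refine ⟨?_⟩
    rintro p q (⟨h, h2⟩ | ⟨h, h2⟩)
    exacts [Or.inl ⟨h.symm, h2.symm⟩, Or.inr ⟨h.symm, h2.symm⟩]
  loopless := by refine ⟨?_⟩; rintro p (⟨-, h | h⟩ | ⟨-, h | h⟩) <;> omega

/-- The vertex of `C_{2k} ⊗ C_{2k}` corresponding to the grid point `(i,j)`
(0-based; in the 1-based indexing of the paper this is `(k + i − j − 1, i + j − 1)`). -/
def gridEmbed (k n : ℕ) (p : Fin k × Fin k) : ZMod n × ZMod n :=
  ((k : ZMod n) + (p.1 : ℕ) - (p.2 : ℕ) - 1, ((p.1 : ℕ) : ZMod n) + (p.2 : ℕ) + 1)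

/-! In the rotated coordinates `u = i - j`, `v = i + j` a step of the grid changes both `u` and
`v` by `±1`, which is exactly adjacency in `C_{2k} ⊗ C_{2k}`. Over the grid, differences of `u`
(or of `v`) have absolute value at most `2k - 2`, so neither equality nor the relation
`± 1` can wrap around modulo `2k`. -/

theorem ZMod.intCast_eq_intCast_iff_of_abs_sub_lt {n : ℕ} {a b : ℤ} (h : |a - b| < n) :
    (a : ZMod n) = b ↔ a = b := by
  rw [ZMod.intCast_eq_intCast_iff_dvd_sub]
  refine ⟨fun hdvd => ?_, fun hab => by simp [hab]⟩
  have := Int.eq_zero_of_abs_lt_dvd hdvd (by rwa [abs_sub_comm])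
  omega

theorem cycleZMod_adj_intCast_iff {n : ℕ} {a b : ℤ} (h : |a - b| + 2 ≤ n) :
    (cycleZMod n).Adj a b ↔ a - b = 1 ∨ b - a = 1 := by
  have := le_abs_self (a - b)
  have := neg_abs_le (a - b)
  have cast_iff (c d : ℤ) (hcd : |c - d| < n) := ZMod.intCast_eq_intCast_iff_of_abs_sub_lt hcd
  simp only [cycleZMod, ← Int.cast_sub, ← Int.cast_one (R := ZMod n), ne_eq,
    cast_iff a b (by omega), cast_iff (a - b) 1 (abs_lt.mpr ⟨by omega, by omega⟩),
    cast_iff (b - a) 1 (abs_lt.mpr ⟨by omega, by omega⟩)]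
  omega

theorem gridEmbed_eq_intCast (k n : ℕ) (p : Fin k × Fin k) :
    gridEmbed k n p = (((k + p.1 - p.2 - 1 : ℤ) : ZMod n), ((p.1 + p.2 + 1 : ℤ) : ZMod n)) := by
  simp [gridEmbed]

theorem gridGraph_adj_iff {k : ℕ} (p q : Fin k × Fin k) :
    (gridGraph k).Adj p q ↔
      ((p.1 - p.2 : ℤ) - (q.1 - q.2) = 1 ∨ (q.1 - q.2 : ℤ) - (p.1 - p.2) = 1) ∧
        ((p.1 + p.2 : ℤ) - (q.1 + q.2) = 1 ∨ (q.1 + q.2 : ℤ) - (p.1 + p.2) = 1) := by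
  simp only [gridGraph, Fin.ext_iff]
  omega

theorem stmt15_general (k n : ℕ) (hn : n = 2 * k) :
    Function.Injective (gridEmbed k n) ∧
    ∀ p q : Fin k × Fin k,
      (gridGraph k).Adj p q ↔
        ((cycleZMod n).tensor (cycleZMod n)).Adj (gridEmbed k n p) (gridEmbed k n q) := by
  subst hn
  have diff_bound (p q : Fin k × Fin k) :
      |(k + p.1 - p.2 - 1 : ℤ) - (k + q.1 - q.2 - 1)| + 2 ≤ (2 * k : ℕ) ∧
        |(p.1 + p.2 + 1 : ℤ) - (q.1 + q.2 + 1)| + 2 ≤ (2 * k : ℕ) := by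
    have := p.1.isLt; have := p.2.isLt; have := q.1.isLt; have := q.2.isLt
    constructor <;> rw [← le_sub_iff_add_le, abs_le] <;> push_cast <;> omega
  refine ⟨fun p q hpq => ?_, fun p q => ?_⟩
  · simp only [gridEmbed_eq_intCast, Prod.mk.injEq] at hpq
    rw [ZMod.intCast_eq_intCast_iff_of_abs_sub_lt (by linarith [(diff_bound p q).1]),
      ZMod.intCast_eq_intCast_iff_of_abs_sub_lt (by linarith [(diff_bound p q).2])] at hpq
    exact Prod.ext (Fin.ext (by omega)) (Fin.ext (by omega))
  · rw [gridGraph_adj_iff, gridEmbed_eq_intCast, gridEmbed_eq_intCast]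
    simp only [SimpleGraph.tensor, cycleZMod_adj_intCast_iff (diff_bound p q).1,
      cycleZMod_adj_intCast_iff (diff_bound p q).2]
    omega

/-- For `k ≥ 2`, `C_{2k} ⊗ C_{2k}` (on `ZMod (2k) × ZMod (2k)`) contains the
`(k × k)`-grid as a subgraph: the map `(i,j) ↦ (k + i − j − 1, i + j − 1)` is injective
and identifies the grid with the induced subgraph on its image `U`. -/
theorem stmt15 (k n : ℕ) (hk : 2 ≤ k) (hn : n = 2 * k) [NeZero n] :
    Function.Injective (gridEmbed k n) ∧
    ∀ p q : Fin k × Fin k,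
      (gridGraph k).Adj p q ↔
        ((cycleZMod n).tensor (cycleZMod n)).Adj (gridEmbed k n p) (gridEmbed k n q) :=
  stmt15_general k n hn
end
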